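/- Let P be a finite subset of the Euclidean plane ℝ² with P.ncard = 4 and (Bd(P)).ncard = 4, such that P is not collinear and the four points of P do not all lie on a common circle. Then (𝒱(P)).ncard = 2, and 𝒱^[n](P) = ∅ for all n ≥ 2. -/

import Mathlib

open Set

abbrev Plane : Type := EuclideanSpace ℝ (Fin 2)

/-- The Voronoi cell of a generator `p` for a generating set `P`. -/
def cell (P : Set Plane) (p : Plane) : Set Plane :=
  {x : Plane | ∀ q ∈ P, dist x p ≤ dist x q}

/-- The set of nearest generators of `x` in `P`. -/
def nearest (P : Set Plane) (x : Plane) : Set Plane :=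
  {p ∈ P | ∀ q ∈ P, dist x p ≤ dist x q}

/-- The Voronoi vertex set: points with at least 3 nearest generators. -/
def vtx (P : Set Plane) : Set Plane :=
  {x : Plane | 3 ≤ (nearest P x).encard}

/-- The boundary of a point set: its points on the frontier of its convex hull. -/
def Bd (S : Set Plane) : Set Plane :=
  S ∩ frontier (convexHull ℝ S)

/-- The number of instances of cocircularity. -/
noncomputable def Ic (P : Set Plane) : ℤ :=
  ∑ᶠ x ∈ vtx P, (((nearest P x).ncard : ℤ) - 3)

/-!
For four points not on a common circle, a Voronoi vertex has exactly three nearest generators,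
so it is the centre of the circle through three of the points having the fourth point strictly
outside, and each point `p` contributes at most one such centre. Hence `𝒱(P)` is in bijection
with the points of `P` lying outside the circle through the other three, and it remains to see
that there are exactly two of them.

If three of the points are collinear, the middle one lies inside every circle through the two
ends, while each end lies outside the circle through the other three points. Otherwise write
`wᵢ` for the signed orientations of the four triangles, the coefficients of the affine dependence
`∑ wᵢ pᵢ = 0`, `∑ wᵢ = 0`, and `K` for the incircle determinant. By the power-of-a-point
identity, `pᵢ` is outside the circle through the others iff `K wᵢ < 0`; and `pᵢ` lies inside
the triangle of the others iff `wᵢ` has the sign opposite to all other `wⱼ`. Convex position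
therefore leaves two positive and two negative `wᵢ`.

Finally `𝒱` of a set with at most two points is empty.
-/

open EuclideanGeometry

lemma range_fin_three {α : Type*} (a b c : α) : range ![a, b, c] = {a, b, c} := by
  rw [Matrix.range_cons, Matrix.range_cons_cons_empty, singleton_union]

lemma encard_sdiff_singleton_eq_three {α : Type*} {P : Set α} (hP : P.ncard = 4) {p : α}
    (hp : p ∈ P) : (P \ {p}).encard = 3 := by
  have hfin : P.Finite := finite_of_ncard_ne_zero (by omega)
  rw [← (hfin.subset sdiff_subset).cast_ncard_eq, ncard_sdiff_singleton_of_mem hp, hP]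
  rfl

lemma exists_eq_of_ncard_eq_four {α : Type*} {P : Set α} (hP : P.ncard = 4) :
    ∃ a b c d, a ≠ b ∧ a ≠ c ∧ a ≠ d ∧ b ≠ c ∧ b ≠ d ∧ c ≠ d ∧ P = {a, b, c, d} := by
  obtain ⟨a, ha⟩ := nonempty_of_ncard_ne_zero (s := P) (by omega)
  obtain ⟨b, c, d, hbc, hbd, hcd, hrest⟩ :=
    (ncard_eq_three (s := P \ {a})).mp (by rw [ncard_sdiff_singleton_of_mem ha, hP])
  have hmem : ∀ x ∈ ({b, c, d} : Set α), a ≠ x := fun x hx hax => by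
    rw [← hrest] at hx; exact hx.2 hax.symm
  refine ⟨a, b, c, d, hmem b (by simp), hmem c (by simp), hmem d (by simp), hbc, hbd, hcd, ?_⟩
  rw [← hrest, insert_sdiff_singleton, insert_eq_of_mem ha]

open Finset in
lemma two_le_card_filter_neg {ι : Type*} [Fintype ι] [Nonempty ι] {v : ι → ℝ}
    (hsum : ∑ i, v i = 0) (hmixed : ∀ i, ∃ j ≠ i, 0 < v i * v j) :
    2 ≤ #{i | v i < 0} := by
  obtain ⟨i, hi⟩ : ∃ i, v i < 0 := by
    by_contra! hnonneg
    obtain ⟨j, -, hj⟩ := hmixed (Classical.arbitrary ι)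
    have hzero := (sum_eq_zero_iff_of_nonneg fun i _ => hnonneg i).mp hsum
    simp [hzero] at hj
  obtain ⟨j, hji, hj⟩ := hmixed i
  have hj' : v j < 0 := neg_of_mul_pos_right hj hi.le
  by_contra! hlt
  exact hji (card_le_one.mp (Nat.le_of_lt_succ hlt) j (by simpa) i (by simpa))

open Finset in
lemma card_filter_neg_eq_two {v : Fin 4 → ℝ} (hsum : ∑ i, v i = 0)
    (hmixed : ∀ i, ∃ j ≠ i, 0 < v i * v j) : #{i | v i < 0} = 2 := by
  have hneg := two_le_card_filter_neg hsum hmixed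
  have hpos := two_le_card_filter_neg (v := -v) (by simp [hsum]) (fun i => by simpa using hmixed i)
  have hsplit := card_filter_add_card_filter_not (s := univ) (fun i => v i < 0)
  have hle : #{i | (-v) i < 0} ≤ #{i | ¬v i < 0} :=
    card_le_card fun i => by simp only [mem_filter, Pi.neg_apply, neg_lt_zero]; grind
  simp only [card_univ, Fintype.card_fin] at hsplit
  omega

lemma Plane.ext_coord {x y : Plane} (h0 : x 0 = y 0) (h1 : x 1 = y 1) : x = y := by
  ext i; fin_cases i <;> assumption

lemma Plane.dist_sq_eq (x y : Plane) : dist x y ^ 2 = (x 0 - y 0) ^ 2 + (x 1 - y 1) ^ 2 := by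
  rw [EuclideanSpace.dist_eq, Real.sq_sqrt (by positivity)]
  simp [Fin.sum_univ_two, Real.dist_eq, sq_abs]

lemma Plane.norm_sq_eq (x : Plane) : ‖x‖ ^ 2 = x 0 ^ 2 + x 1 ^ 2 := by
  simp [EuclideanSpace.norm_sq_eq, Fin.sum_univ_two]

noncomputable def orient (a b c : Plane) : ℝ :=
  (b 0 - a 0) * (c 1 - a 1) - (b 1 - a 1) * (c 0 - a 0)

/-- The determinant with rows `(xᵢ, yᵢ, xᵢ² + yᵢ², 1)`, expanded along its third column. -/
noncomputable def incircle (a b c d : Plane) : ℝ :=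
  ‖a‖ ^ 2 * orient b c d - ‖b‖ ^ 2 * orient a c d + ‖c‖ ^ 2 * orient a b d - ‖d‖ ^ 2 * orient a b c

lemma orient_eq_zero_iff_collinear {a b c : Plane} :
    orient a b c = 0 ↔ Collinear ℝ ({a, b, c} : Set Plane) := by
  constructor
  · intro h
    by_cases hab : a = b
    · rw [hab, insert_eq_of_mem (mem_insert _ _)]
      exact collinear_pair ℝ b c
    have hn : 0 < (b 0 - a 0) ^ 2 + (b 1 - a 1) ^ 2 := by
      by_contra! hle
      exact hab (Plane.ext_coord (by nlinarith) (by nlinarith))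
    rw [collinear_iff_of_mem (mem_insert a _)]
    refine ⟨b - a, ?_⟩
    simp only [mem_insert_iff, mem_singleton_iff]
    rintro p (rfl | rfl | rfl)
    · exact ⟨0, by simp⟩
    · exact ⟨1, by simp⟩
    · refine ⟨((p 0 - a 0) * (b 0 - a 0) + (p 1 - a 1) * (b 1 - a 1)) /
        ((b 0 - a 0) ^ 2 + (b 1 - a 1) ^ 2), Plane.ext_coord ?_ ?_⟩ <;>
      simp only [vadd_eq_add, PiLp.add_apply, PiLp.smul_apply, PiLp.sub_apply, smul_eq_mul] <;>
      unfold orient at h <;> field_simp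
      · linear_combination -(b 1 - a 1) * h
      · linear_combination (b 0 - a 0) * h
  · intro h
    obtain ⟨v, hv⟩ := (collinear_iff_of_mem (mem_insert a _)).mp h
    obtain ⟨s, hs⟩ := hv b (by simp)
    obtain ⟨t, ht⟩ := hv c (by simp)
    have hcoord : ∀ (u : ℝ) (i : Fin 2), (u • v +ᵥ a) i = u * v i + a i := fun _ _ => rfl
    rw [orient, hs, ht, hcoord, hcoord, hcoord, hcoord]
    ring

lemma orient_mul_power_eq_neg_incircle {a b c o : Plane} (hb : dist a o = dist b o)
    (hc : dist a o = dist c o) (s : Plane) :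
    orient a b c * (dist s o ^ 2 - dist a o ^ 2) = -incircle a b c s := by
  have hb2 := congrArg (· ^ 2) hb
  have hc2 := congrArg (· ^ 2) hc
  simp only [Plane.dist_sq_eq] at hb2 hc2 ⊢
  simp only [incircle, orient, Plane.norm_sq_eq]
  linear_combination ((c 0 - a 0) * (s 1 - a 1) - (c 1 - a 1) * (s 0 - a 0)) * hb2 +
    ((s 0 - a 0) * (b 1 - a 1) - (s 1 - a 1) * (b 0 - a 0)) * hc2

lemma cospherical_of_not_collinear {V P : Type*} [NormedAddCommGroup V] [InnerProductSpace ℝ V]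
    [MetricSpace P] [NormedAddTorsor V P] {a b c : P} (h : ¬Collinear ℝ {a, b, c}) :
    Cospherical ({a, b, c} : Set P) := by
  let t : Affine.Triangle ℝ P := ⟨![a, b, c], affineIndependent_iff_not_collinear_set.mpr h⟩
  refine ⟨t.circumcenter, t.circumradius, ?_⟩
  simp only [mem_insert_iff, mem_singleton_iff, forall_eq_or_imp, forall_eq]
  exact ⟨t.dist_circumcenter_eq_circumradius 0, t.dist_circumcenter_eq_circumradius 1,
    t.dist_circumcenter_eq_circumradius 2⟩

lemma EuclideanGeometry.Cospherical.exists_pos_radius {P : Type*} [MetricSpace P] {s : Set P}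
    (h : Cospherical s) (hs : s.Nontrivial) : ∃ c r, 0 < r ∧ ∀ p ∈ s, dist p c = r := by
  obtain ⟨c, r, hr⟩ := h
  obtain ⟨a, ha, b, hb, hab⟩ := hs
  refine ⟨c, r, lt_of_le_of_ne (hr a ha ▸ dist_nonneg) fun h0 => hab ?_, hr⟩
  rw [dist_eq_zero.mp ((hr a ha).trans h0.symm), dist_eq_zero.mp ((hr b hb).trans h0.symm)]

lemma eq_of_forall_dist_eq {a b c o o' : Plane} {r r' : ℝ} (hab : a ≠ b) (hac : a ≠ c)
    (hbc : b ≠ c) (ho : ∀ q ∈ ({a, b, c} : Set Plane), dist q o = r)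
    (ho' : ∀ q ∈ ({a, b, c} : Set Plane), dist q o' = r') : o = o' := by
  by_contra hne
  simp only [mem_insert_iff, mem_singleton_iff, forall_eq_or_imp, forall_eq] at ho ho'
  rcases eq_of_dist_eq_of_dist_eq_of_finrank_eq_two finrank_euclideanSpace_fin hne hab
    ho.1 ho.2.1 ho.2.2 ho'.1 ho'.2.1 ho'.2.2 with h | h
  exacts [hac h.symm, hbc h.symm]

section StrictConvexSpace

variable {V P : Type*} [NormedAddCommGroup V] [NormedSpace ℝ V] [StrictConvexSpace ℝ V]
  [PseudoMetricSpace P] [NormedAddTorsor V P]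

lemma Sbtw.dist_lt_of_dist_eq {a b c o : P} {r : ℝ} (h : Sbtw ℝ a b c) (ha : dist a o = r)
    (hc : dist c o = r) : dist b o < r := by
  simpa [ha, hc] using h.dist_lt_max_dist o

lemma Sbtw.lt_dist_of_dist_eq {a b c o : P} {r : ℝ} (h : Sbtw ℝ a b c) (hb : dist b o = r)
    (hc : dist c o = r) : r < dist a o := by
  have := h.dist_lt_max_dist o
  rw [hb, hc, lt_max_iff] at this
  exact this.resolve_right (lt_irrefl r)

end StrictConvexSpace

def OutsideCircleThrough (T : Set Plane) (p : Plane) : Prop :=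
  ∃ o r, (∀ q ∈ T, dist q o = r) ∧ r < dist p o

lemma outsideCircleThrough_iff {a b c : Plane} (h : ¬Collinear ℝ {a, b, c}) (p : Plane) :
    OutsideCircleThrough {a, b, c} p ↔ incircle a b c p * orient a b c < 0 := by
  obtain ⟨o, r, ho⟩ := cospherical_of_not_collinear h
  have horient : orient a b c ≠ 0 := mt orient_eq_zero_iff_collinear.mp h
  have hsign : incircle a b c p * orient a b c < 0 ↔ dist a o ^ 2 < dist p o ^ 2 := by
    have key := orient_mul_power_eq_neg_incircle ((ho a (by simp)).trans (ho b (by simp)).symm)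
      ((ho a (by simp)).trans (ho c (by simp)).symm) p
    rw [← neg_neg (incircle a b c p), ← key, neg_mul, neg_lt_zero, mul_comm, ← mul_assoc,
      ← sq, mul_pos_iff_of_pos_left (by positivity), sub_pos]
  rw [hsign, sq_lt_sq₀ dist_nonneg dist_nonneg, ho a (by simp)]
  constructor
  · rintro ⟨o', r', ho', hlt⟩
    obtain rfl := eq_of_forall_dist_eq (ne₁₂_of_not_collinear h) (ne₁₃_of_not_collinear h)
      (ne₂₃_of_not_collinear h) ho' ho
    rwa [← ho' a (by simp), ho a (by simp)] at hlt
  · exact fun hlt => ⟨o, r, ho, hlt⟩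

lemma incircle_ne_zero {a b c d : Plane} (h : ¬Collinear ℝ {a, b, c})
    (hcirc : ¬Cospherical ({a, b, c, d} : Set Plane)) : incircle a b c d ≠ 0 := by
  intro h0
  obtain ⟨o, r, ho⟩ := cospherical_of_not_collinear h
  simp only [mem_insert_iff, mem_singleton_iff, forall_eq_or_imp, forall_eq] at ho
  have key := orient_mul_power_eq_neg_incircle (ho.1.trans ho.2.1.symm) (ho.1.trans ho.2.2.symm) d
  rw [h0, neg_zero, mul_eq_zero, orient_eq_zero_iff_collinear, sub_eq_zero,
    sq_eq_sq₀ dist_nonneg dist_nonneg, ho.1] at key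
  refine hcirc ⟨o, r, ?_⟩
  simp only [mem_insert_iff, mem_singleton_iff, forall_eq_or_imp, forall_eq]
  exact ⟨ho.1, ho.2.1, ho.2.2, key.resolve_left h⟩

/-- The barycentric coordinates of `x` in the frame `p, q, r` are the ratios
`orient x q r / orient p q r`, `orient p x r / orient p q r`, `orient p q x / orient p q r`. -/
lemma mem_interior_convexHull_of_orient {p q r x : Plane} (h₁ : 0 < orient x q r * orient p q r)
    (h₂ : 0 < orient p x r * orient p q r) (h₃ : 0 < orient p q x * orient p q r) :
    x ∈ interior (convexHull ℝ {p, q, r}) := by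
  have hD : orient p q r ≠ 0 := by rintro h; simp [h] at h₁
  have hind : AffineIndependent ℝ ![p, q, r] := by
    rw [affineIndependent_iff_not_collinear_set, ← orient_eq_zero_iff_collinear]
    exact hD
  have hspan : affineSpan ℝ (range ![p, q, r]) = ⊤ := by
    rw [hind.affineSpan_eq_top_iff_card_eq_finrank_add_one]
    simp
  let B : AffineBasis (Fin 3) ℝ Plane := ⟨![p, q, r], hind, hspan⟩
  have hB : ⇑B = ![p, q, r] := rfl
  let w : Fin 3 → ℝ := ![orient x q r / orient p q r, orient p x r / orient p q r,
    orient p q x / orient p q r]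
  have hw : ∑ i, w i = 1 := by
    simp only [w, Fin.sum_univ_three, Matrix.cons_val_zero, Matrix.cons_val_one,
      Matrix.cons_val_two, Matrix.head_cons, Matrix.tail_cons]
    field_simp
    unfold orient; ring
  have hx : Finset.univ.affineCombination ℝ B w = x := by
    rw [Finset.affineCombination_eq_linear_combination _ _ _ hw, hB]
    simp only [w, Fin.sum_univ_three, Matrix.cons_val_zero, Matrix.cons_val_one,
      Matrix.cons_val_two, Matrix.head_cons, Matrix.tail_cons]
    apply Plane.ext_coord <;>
    · simp only [PiLp.add_apply, PiLp.smul_apply, smul_eq_mul]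
      field_simp
      unfold orient; ring
  rw [← range_fin_three, ← hB, AffineBasis.interior_convexHull]
  intro i
  rw [← hx, B.coord_apply_combination_of_mem (Finset.mem_univ i) hw]
  fin_cases i <;> simpa [w, div_pos_iff, ← mul_pos_iff]

lemma dist_eq_of_mem_nearest {P : Set Plane} {x p q : Plane} (hp : p ∈ nearest P x)
    (hq : q ∈ nearest P x) : dist x p = dist x q :=
  le_antisymm (hp.2 q hq.1) (hq.2 p hp.1)

lemma mem_vtx_iff_exists_nearest_eq_sdiff {P : Set Plane} (hP : P.ncard = 4)
    (hcirc : ¬Cospherical P) {x : Plane} : x ∈ vtx P ↔ ∃ p ∈ P, nearest P x = P \ {p} := by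
  constructor
  · intro hx
    obtain ⟨p, hp, hpx⟩ : ∃ p ∈ P, p ∉ nearest P x := by
      by_contra! hall
      obtain ⟨p₀, hp₀⟩ := nonempty_of_ncard_ne_zero (s := P) (by omega)
      exact hcirc ⟨x, dist p₀ x, fun p hp => by
        rw [dist_comm, dist_comm p₀, dist_eq_of_mem_nearest (hall p hp) (hall p₀ hp₀)]⟩
    have hsub : nearest P x ⊆ P \ {p} := fun q hq => ⟨hq.1, fun hqp => hpx (hqp ▸ hq)⟩
    have hfin : P.Finite := finite_of_ncard_ne_zero (by omega)
    refine ⟨p, hp, ((hfin.subset sdiff_subset).subset hsub).eq_of_subset_of_encard_le hsub ?_⟩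
    rw [encard_sdiff_singleton_eq_three hP hp]
    exact hx
  · rintro ⟨p, hp, h⟩
    show 3 ≤ (nearest P x).encard
    rw [h, encard_sdiff_singleton_eq_three hP hp]

lemma subsingleton_setOf_nearest_eq {P T : Set Plane} (hT : 3 ≤ T.encard) :
    {x | nearest P x = T}.Subsingleton := by
  obtain ⟨T', hT'T, hT'⟩ := exists_subset_encard_eq hT
  obtain ⟨a, b, c, hab, hac, hbc, rfl⟩ := encard_eq_three.mp hT'
  have hequi : ∀ z, nearest P z = T → ∀ q ∈ ({a, b, c} : Set Plane), dist q z = dist a z := by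
    intro z hz q hq
    rw [dist_comm, dist_comm a, dist_eq_of_mem_nearest (hz ▸ hT'T hq) (hz ▸ hT'T (mem_insert a _))]
  exact fun x hx y hy => eq_of_forall_dist_eq hab hac hbc (hequi x hx) (hequi y hy)

lemma exists_nearest_eq_sdiff_iff {P : Set Plane} {p : Plane} (hp : p ∈ P)
    (hne : (P \ {p}).Nonempty) :
    (∃ x, nearest P x = P \ {p}) ↔ OutsideCircleThrough (P \ {p}) p := by
  obtain ⟨q₀, hq₀⟩ := hne
  constructor
  · rintro ⟨x, hx⟩
    have hr : ∀ q ∈ P \ {p}, dist q x = dist q₀ x := fun q hq => by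
      rw [dist_comm, dist_comm q₀, dist_eq_of_mem_nearest (hx ▸ hq) (hx ▸ hq₀)]
    have hpx : p ∉ nearest P x := by simp [hx]
    simp only [nearest, mem_ofPred_eq, hp, true_and, not_forall, not_le] at hpx
    obtain ⟨q, hq, hlt⟩ := hpx
    refine ⟨x, dist q₀ x, hr, ?_⟩
    rw [← hr q ⟨hq, fun hqp => (hqp ▸ hlt).false⟩, dist_comm, dist_comm p]
    exact hlt
  · rintro ⟨o, r, ho, hlt⟩
    refine ⟨o, Set.ext fun q =>
      ⟨fun hq => ⟨hq.1, fun hqp => ?_⟩, fun hq => ⟨hq.1, fun q' hq' => ?_⟩⟩⟩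
    · have := hq.2 q₀ hq₀.1
      rw [mem_singleton_iff.mp hqp, dist_comm, dist_comm o, ho q₀ hq₀] at this
      exact this.not_gt hlt
    · rw [dist_comm, ho q hq, dist_comm]
      by_cases hq'p : q' = p
      · exact hq'p ▸ hlt.le
      · exact (ho q' ⟨hq', hq'p⟩).ge

lemma ncard_vtx_eq_ncard_setOf_outsideCircleThrough {P : Set Plane} (hP : P.ncard = 4)
    (hcirc : ¬Cospherical P) :
    (vtx P).ncard = {p ∈ P | OutsideCircleThrough (P \ {p}) p}.ncard := by
  have h3 : ∀ p ∈ P, (P \ {p}).encard = 3 := fun p hp => encard_sdiff_singleton_eq_three hP hp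
  have key : ∀ p ∈ P, (∃ x, nearest P x = P \ {p}) ↔ OutsideCircleThrough (P \ {p}) p :=
    fun p hp => exists_nearest_eq_sdiff_iff hp (nonempty_of_encard_ne_zero (by simp [h3 p hp]))
  symm
  refine ncard_congr (fun p hp => ((key p hp.1).mpr hp.2).choose) (fun p hp => ?_)
    (fun p q hp hq hpq => ?_) (fun x hx => ?_)
  · exact (mem_vtx_iff_exists_nearest_eq_sdiff hP hcirc).mpr
      ⟨p, hp.1, ((key p hp.1).mpr hp.2).choose_spec⟩
  · have hPpq : P \ {p} = P \ {q} := ((key p hp.1).mpr hp.2).choose_spec.symm.trans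
      (hpq ▸ ((key q hq.1).mpr hq.2).choose_spec)
    by_contra hne
    exact (hPpq ▸ (⟨hp.1, hne⟩ : p ∈ P \ {q}) : p ∈ P \ {p}).2 rfl
  · obtain ⟨p, hp, hx⟩ := (mem_vtx_iff_exists_nearest_eq_sdiff hP hcirc).mp hx
    have hout := (key p hp).mp ⟨x, hx⟩
    exact ⟨p, ⟨hp, hout⟩,
      subsingleton_setOf_nearest_eq (h3 p hp).ge ((key p hp).mpr hout).choose_spec hx⟩

lemma vtx_eq_empty_of_encard_le_two {S : Set Plane} (h : S.encard ≤ 2) : vtx S = ∅ :=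
  eq_empty_of_forall_notMem fun _ hx =>
    absurd ((hx.trans (encard_mono fun _ hy => hy.1)).trans h) (by norm_num)

lemma iterate_vtx_eq_empty {P : Set Plane} (h : (vtx P).encard ≤ 2) {n : ℕ} (hn : 2 ≤ n) :
    vtx^[n] P = ∅ := by
  obtain ⟨m, rfl⟩ := Nat.exists_eq_add_of_le' hn
  rw [Function.iterate_add_apply, Function.iterate_succ_apply', Function.iterate_one,
    vtx_eq_empty_of_encard_le_two h]
  exact Function.iterate_fixed (vtx_eq_empty_of_encard_le_two (by simp)) m

lemma outsideCircleThrough_of_sbtw {T : Set Plane} {a b c d : Plane} (h : Sbtw ℝ a b c)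
    (hbcd : ¬Collinear ℝ {b, c, d}) (hT : T ⊆ {b, c, d}) : OutsideCircleThrough T a := by
  obtain ⟨o, r, ho⟩ := cospherical_of_not_collinear hbcd
  exact ⟨o, r, fun q hq => ho q (hT hq), h.lt_dist_of_dist_eq (ho b (by simp)) (ho c (by simp))⟩

lemma setOf_outsideCircleThrough_eq_of_sbtw {P : Set Plane} {a b c d : Plane}
    (hP : P = insert d {a, b, c}) (hbtw : Sbtw ℝ a b c) (hcol : ¬Collinear ℝ P) :
    {p ∈ P | OutsideCircleThrough (P \ {p}) p} = {a, c} := by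
  have hab := hbtw.left_ne
  have hbc := hbtw.ne_right
  have habc := hbtw.wbtw.collinear
  have hd : d ∉ ({a, b, c} : Set Plane) := fun hd => hcol (by rwa [hP, insert_eq_of_mem hd])
  simp only [mem_insert_iff, mem_singleton_iff, not_or] at hd
  obtain ⟨hda, hdb, hdc⟩ := hd
  have hbcd : ¬Collinear ℝ {b, c, d} := fun h => hcol <| hP ▸
    collinear_insert_insert_of_mem_affineSpan_pair
      (h.mem_affineSpan_of_mem_of_ne (by simp) (by simp) (by simp) hbc)
      (habc.mem_affineSpan_of_mem_of_ne (by simp) (by simp) (by simp) hbc)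
  have habd : ¬Collinear ℝ {b, a, d} := fun h => hcol <| hP ▸
    (collinear_insert_insert_of_mem_affineSpan_pair
      (h.mem_affineSpan_of_mem_of_ne (p₃ := d) (by simp) (by simp) (by simp) hab)
      (habc.mem_affineSpan_of_mem_of_ne (p₃ := c) (by simp) (by simp) (by simp) hab)).subset
      (by intro q; simp; tauto)
  ext p
  constructor
  · rintro ⟨hp, o, r, ho, hlt⟩
    rw [hP] at hp
    rcases hp with rfl | rfl | rfl | rfl
    · exact absurd (ho b ⟨by simp [hP], Ne.symm hdb⟩)
        (hbtw.dist_lt_of_dist_eq (ho a ⟨by simp [hP], Ne.symm hda⟩)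
          (ho c ⟨by simp [hP], Ne.symm hdc⟩)).ne
    · simp
    · exact absurd hlt
        (hbtw.dist_lt_of_dist_eq (ho a ⟨by simp [hP], hab⟩) (ho c ⟨by simp [hP], hbc.symm⟩)).not_gt
    · simp
  · rintro (rfl | rfl)
    · exact ⟨by simp [hP], outsideCircleThrough_of_sbtw hbtw hbcd (by intro q; simp [hP]; tauto)⟩
    · exact ⟨by simp [hP],
        outsideCircleThrough_of_sbtw hbtw.symm habd (by intro q; simp [hP]; tauto)⟩

lemma ncard_setOf_outsideCircleThrough_eq_two_of_collinear {P T : Set Plane}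
    (hP : P.ncard = 4) (hcol : ¬Collinear ℝ P) (hTP : T ⊆ P) (hT : T.ncard = 3)
    (hTcol : Collinear ℝ T) : {p ∈ P | OutsideCircleThrough (P \ {p}) p}.ncard = 2 := by
  have hfin : P.Finite := finite_of_ncard_ne_zero (by omega)
  obtain ⟨d, hdP, hdT⟩ : (P \ T).Nonempty :=
    nonempty_of_ncard_ne_zero (by rw [ncard_sdiff hTP (hfin.subset hTP), hP, hT]; decide)
  obtain ⟨x, y, z, hxy, hxz, hyz, rfl⟩ := ncard_eq_three.mp hT
  have hPeq : P = insert d {x, y, z} :=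
    (eq_of_subset_of_ncard_le (insert_subset hdP hTP) (by rw [ncard_insert_of_notMem hdT, hT, hP])
      hfin).symm
  rcases hTcol.wbtw_or_wbtw_or_wbtw with h | h | h
  · rw [setOf_outsideCircleThrough_eq_of_sbtw hPeq ⟨h, hxy.symm, hyz⟩ hcol, ncard_pair hxz]
  · rw [setOf_outsideCircleThrough_eq_of_sbtw (hPeq.trans (by ext; simp; tauto))
      ⟨h, hyz.symm, hxz.symm⟩ hcol, ncard_pair hxy.symm]
  · rw [setOf_outsideCircleThrough_eq_of_sbtw (hPeq.trans (by ext; simp; tauto)) ⟨h, hxz, hxy⟩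
      hcol, ncard_pair hyz.symm]

/-- The coefficients of the affine dependence `∑ wᵢ • pᵢ = 0`, `∑ wᵢ = 0` of `p = ![a, b, c, d]`. -/
noncomputable def faceOrient (a b c d : Plane) : Fin 4 → ℝ :=
  ![-orient b c d, orient a c d, -orient a b d, orient a b c]

lemma sum_faceOrient (a b c d : Plane) : ∑ i, faceOrient a b c d i = 0 := by
  simp only [faceOrient, Fin.sum_univ_four, Matrix.cons_val_zero, Matrix.cons_val_one,
    Matrix.cons_val_two, Matrix.cons_val_three, Matrix.head_cons, Matrix.tail_cons]
  unfold orient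
  ring

lemma outsideCircleThrough_iff_faceOrient {a b c d : Plane} (hbcd : ¬Collinear ℝ {b, c, d})
    (hacd : ¬Collinear ℝ {a, c, d}) (habd : ¬Collinear ℝ {a, b, d})
    (habc : ¬Collinear ℝ {a, b, c}) (i : Fin 4) :
    OutsideCircleThrough ({a, b, c, d} \ {![a, b, c, d] i}) (![a, b, c, d] i) ↔
      incircle a b c d * faceOrient a b c d i < 0 := by
  have := ne₁₂_of_not_collinear habc
  have := ne₁₃_of_not_collinear habc
  have := ne₂₃_of_not_collinear habc
  have := ne₁₃_of_not_collinear habd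
  have := ne₂₃_of_not_collinear habd
  have := ne₂₃_of_not_collinear hacd
  fin_cases i <;> dsimp [faceOrient]
  · rw [show ({a, b, c, d} : Set Plane) \ {a} = {b, c, d} by ext; aesop,
      outsideCircleThrough_iff hbcd, show incircle b c d a = -incircle a b c d by
        unfold incircle orient; ring, neg_mul, mul_neg]
  · rw [show ({a, b, c, d} : Set Plane) \ {b} = {a, c, d} by ext; aesop,
      outsideCircleThrough_iff hacd, show incircle a c d b = incircle a b c d by
        unfold incircle orient; ring]
  · rw [show ({a, b, c, d} : Set Plane) \ {c} = {a, b, d} by ext; aesop,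
      outsideCircleThrough_iff habd, show incircle a b d c = -incircle a b c d by
        unfold incircle orient; ring, neg_mul, mul_neg]
  · rw [show ({a, b, c, d} : Set Plane) \ {d} = {a, b, c} by ext; aesop,
      outsideCircleThrough_iff habc]

lemma exists_faceOrient_mul_pos {a b c d : Plane} (hw : ∀ i, faceOrient a b c d i ≠ 0)
    (hconv : ∀ p ∈ ({a, b, c, d} : Set Plane), p ∉ interior (convexHull ℝ {a, b, c, d}))
    (i : Fin 4) : ∃ j ≠ i, 0 < faceOrient a b c d i * faceOrient a b c d j := by
  by_contra! hle
  have hlt : ∀ j ≠ i, faceOrient a b c d i * faceOrient a b c d j < 0 :=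
    fun j hj => (hle j hj).lt_of_ne (mul_ne_zero (hw i) (hw j))
  fin_cases i <;>
    simp only [Fin.forall_fin_succ, faceOrient, Matrix.cons_val, Fin.reduceFinMk, Fin.reduceSucc,
      ne_eq, Fin.reduceEq, not_true_eq_false, not_false_eq_true, IsEmpty.forall_iff,
      forall_const] at hlt <;>
    obtain ⟨h₁, h₂, h₃⟩ := hlt
  · refine hconv a (by simp) (interior_mono (convexHull_mono (subset_insert _ _))
      (mem_interior_convexHull_of_orient (p := b) (q := c) (r := d) ?_ ?_ ?_)) <;>
    unfold orient at * <;> linarith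
  · refine hconv b (by simp) (interior_mono (convexHull_mono (by simp [Set.insert_subset_iff]))
      (mem_interior_convexHull_of_orient (p := a) (q := c) (r := d) ?_ ?_ ?_)) <;>
    unfold orient at * <;> linarith
  · refine hconv c (by simp) (interior_mono (convexHull_mono (by simp [Set.insert_subset_iff]))
      (mem_interior_convexHull_of_orient (p := a) (q := b) (r := d) ?_ ?_ ?_)) <;>
    unfold orient at * <;> linarith
  · refine hconv d (by simp) (interior_mono (convexHull_mono (by simp [Set.insert_subset_iff]))
      (mem_interior_convexHull_of_orient (p := a) (q := b) (r := c) ?_ ?_ ?_)) <;>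
    unfold orient at * <;> linarith

open Finset in
lemma ncard_setOf_outsideCircleThrough_eq_two_of_not_collinear {a b c d : Plane}
    (hbcd : ¬Collinear ℝ {b, c, d}) (hacd : ¬Collinear ℝ {a, c, d})
    (habd : ¬Collinear ℝ {a, b, d}) (habc : ¬Collinear ℝ {a, b, c}) (hK : incircle a b c d ≠ 0)
    (hconv : ∀ p ∈ ({a, b, c, d} : Set Plane), p ∉ interior (convexHull ℝ {a, b, c, d})) :
    {p ∈ ({a, b, c, d} : Set Plane) | OutsideCircleThrough ({a, b, c, d} \ {p}) p}.ncard = 2 := by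
  set K := incircle a b c d
  set w := faceOrient a b c d
  set f : Fin 4 → Plane := ![a, b, c, d]
  have hw : ∀ i, w i ≠ 0 := by
    intro i; fin_cases i <;> simp [w, faceOrient, orient_eq_zero_iff_collinear, *]
  have hcount : #{i | K * w i < 0} = 2 := by
    refine card_filter_neg_eq_two (by rw [← mul_sum, sum_faceOrient, mul_zero]) fun i => ?_
    obtain ⟨j, hji, hj⟩ := exists_faceOrient_mul_pos hw hconv i
    exact ⟨j, hji, by rw [mul_mul_mul_comm]; exact mul_pos (mul_self_pos.mpr hK) hj⟩
  have hf : Function.Injective f := by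
    simp only [f, Matrix.vecCons, Fin.cons_injective_iff]
    simp [ne₁₂_of_not_collinear habc, ne₁₃_of_not_collinear habc, ne₂₃_of_not_collinear habc,
      ne₁₃_of_not_collinear habd, ne₂₃_of_not_collinear habd, ne₂₃_of_not_collinear hacd,
      Function.Injective, eq_iff_true_of_subsingleton]
  have hrange : ({a, b, c, d} : Set Plane) = range f := by
    rw [Matrix.range_cons, Matrix.range_cons, Matrix.range_cons_cons_empty, Set.singleton_union,
      Set.singleton_union]
  have hset : {p ∈ ({a, b, c, d} : Set Plane) | OutsideCircleThrough ({a, b, c, d} \ {p}) p} =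
      f '' {i | K * w i < 0} := by
    nth_rw 1 [hrange]
    ext p
    simp only [Set.mem_ofPred_eq, Set.mem_image, Set.mem_range]
    have hout := outsideCircleThrough_iff_faceOrient hbcd hacd habd habc
    constructor
    · rintro ⟨⟨i, rfl⟩, h⟩; exact ⟨i, (hout i).mp h, rfl⟩
    · rintro ⟨i, h, rfl⟩; exact ⟨⟨i, rfl⟩, (hout i).mpr h⟩
  rw [hset, ncard_image_of_injective _ hf, ncard_eq_toFinset_card', toFinset_ofPred, hcount]

lemma ncard_setOf_outsideCircleThrough_eq_two_of_convexPosition {P : Set Plane}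
    (hP : P.ncard = 4) (hgen : ∀ T ⊆ P, T.ncard = 3 → ¬Collinear ℝ T) (hcirc : ¬Cospherical P)
    (hconv : ∀ p ∈ P, p ∉ interior (convexHull ℝ P)) :
    {p ∈ P | OutsideCircleThrough (P \ {p}) p}.ncard = 2 := by
  obtain ⟨a, b, c, d, hab, hac, had, hbc, hbd, hcd, rfl⟩ := exists_eq_of_ncard_eq_four hP
  have habc := hgen {a, b, c} (by simp [Set.insert_subset_iff])
    (ncard_eq_three.mpr ⟨_, _, _, hab, hac, hbc, rfl⟩)
  exact ncard_setOf_outsideCircleThrough_eq_two_of_not_collinear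
    (hgen {b, c, d} (by simp) (ncard_eq_three.mpr ⟨_, _, _, hbc, hbd, hcd, rfl⟩))
    (hgen {a, c, d} (by simp [Set.insert_subset_iff])
      (ncard_eq_three.mpr ⟨_, _, _, hac, had, hcd, rfl⟩))
    (hgen {a, b, d} (by simp [Set.insert_subset_iff])
      (ncard_eq_three.mpr ⟨_, _, _, hab, had, hbd, rfl⟩))
    habc (incircle_ne_zero habc hcirc) hconv

theorem four_points_convex_position_general (P : Set Plane)
    (h4 : P.ncard = 4) (hbd : (Bd P).ncard = 4) (hcol : ¬ Collinear ℝ P)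
    (hcirc : ¬ ∃ c : Plane, ∃ r : ℝ, 0 < r ∧ ∀ p ∈ P, dist p c = r) :
    (vtx P).ncard = 2 ∧ ∀ n : ℕ, 2 ≤ n → vtx^[n] P = ∅ := by
  have hconv : ∀ p ∈ P, p ∉ interior (convexHull ℝ P) := by
    have hBd : Bd P = P := eq_of_subset_of_ncard_le inter_subset_left (by rw [h4, hbd])
      (finite_of_ncard_ne_zero (by omega))
    exact fun p hp => (show p ∈ Bd P by rwa [hBd]).2.2
  have hcirc' : ¬Cospherical P := fun h =>
    hcirc (h.exists_pos_radius (one_lt_ncard_iff_nontrivial_and_finite.mp (by omega)).1)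
  have hvtx : (vtx P).ncard = 2 := by
    rw [ncard_vtx_eq_ncard_setOf_outsideCircleThrough h4 hcirc']
    by_cases hT : ∃ T ⊆ P, T.ncard = 3 ∧ Collinear ℝ T
    · obtain ⟨T, hTP, hT3, hTcol⟩ := hT
      exact ncard_setOf_outsideCircleThrough_eq_two_of_collinear h4 hcol hTP hT3 hTcol
    · simp only [not_exists, not_and] at hT
      exact ncard_setOf_outsideCircleThrough_eq_two_of_convexPosition h4 hT hcirc' hconv
  refine ⟨hvtx, fun n hn => iterate_vtx_eq_empty ?_ hn⟩
  rw [← (finite_of_ncard_ne_zero (s := vtx P) (by omega)).cast_ncard_eq, hvtx]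
  rfl

theorem four_points_convex_position (P : Set Plane) (hP : P.Finite)
    (h4 : P.ncard = 4) (hbd : (Bd P).ncard = 4) (hcol : ¬ Collinear ℝ P)
    (hcirc : ¬ ∃ c : Plane, ∃ r : ℝ, 0 < r ∧ ∀ p ∈ P, dist p c = r) :
    (vtx P).ncard = 2 ∧ ∀ n : ℕ, 2 ≤ n → vtx^[n] P = ∅ :=
  four_points_convex_position_general P h4 hbd hcol hcirc
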